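/- arXiv:2005.01271 — 4 statements merged into one kernel-verified Lean document; each statement's English description precedes it below -/
import Mathlib

section
/- Let v : ℝ² → ℝ² be twice continuously differentiable and let τ := sym curl v, defined pointwise from the classical partial derivatives of v. Let n = (n₁, n₂) ∈ ℝ² be a unit vector and set t := (−n₂, n₁). Then at every point of ℝ²: D_t(tᵀ τ n) + nᵀ (div τ) = D_t(tᵀ D_t v), where div τ is the row-wise divergence (div τ)ᵢ = ∂₁τ_{i1} + ∂₂τ_{i2}. -/
/-!
Write `A = Dv` and `t = R n` with `R` the rotation by `π/2`. Then `curl v = A R`, so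
`tᵀ τ n = (tᵀ A t - nᵀ A n) / 2`. Since `D²v` is symmetric, the divergence of `A R` vanishes and
`nᵀ div τ = D_t (tr A) / 2`; as `(t, n)` is orthonormal, `tr A = tᵀ A t + nᵀ A n`. Adding the two
halves leaves `D_t (tᵀ A t)`.
-/

open Matrix

/-- The matrix `curl v` at a point `y`, defined row-wise from the classical
partial derivatives of `v`: `(curl v)_{i1} = ∂₂ vᵢ`, `(curl v)_{i2} = -∂₁ vᵢ`. -/
noncomputable def curlMat (v : (Fin 2 → ℝ) → (Fin 2 → ℝ)) (y : Fin 2 → ℝ) :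
    Matrix (Fin 2) (Fin 2) ℝ :=
  Matrix.of fun i j =>
    if j = 0 then fderiv ℝ v y (Pi.single (1 : Fin 2) 1) i
    else -(fderiv ℝ v y (Pi.single (0 : Fin 2) 1) i)

/-- `sym curl v := (curl v + (curl v)ᵀ)/2`, pointwise. -/
noncomputable def symCurlMat (v : (Fin 2 → ℝ) → (Fin 2 → ℝ)) (y : Fin 2 → ℝ) :
    Matrix (Fin 2) (Fin 2) ℝ :=
  (1 / 2 : ℝ) • (curlMat v y + (curlMat v y)ᵀ)

/-- The row-wise divergence of the matrix field `z ↦ symCurlMat v z`: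
`(div τ)ᵢ = ∂₁ τ_{i1} + ∂₂ τ_{i2}`. -/
noncomputable def divSymCurl (v : (Fin 2 → ℝ) → (Fin 2 → ℝ)) (y : Fin 2 → ℝ) :
    Fin 2 → ℝ := fun i =>
  fderiv ℝ (fun z => symCurlMat v z i 0) y (Pi.single (0 : Fin 2) 1) +
    fderiv ℝ (fun z => symCurlMat v z i 1) y (Pi.single (1 : Fin 2) 1)

section DotProductApply

variable {E F ι : Type*} [NormedAddCommGroup E] [NormedSpace ℝ E]
  [NormedAddCommGroup F] [NormedSpace ℝ F] [Fintype ι]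

noncomputable def dotProductApplyCLM (a : ι → ℝ) (b : F) : (F →L[ℝ] (ι → ℝ)) →L[ℝ] ℝ :=
  (∑ i, a i • ContinuousLinearMap.proj i).comp (ContinuousLinearMap.apply ℝ _ b)

@[simp]
theorem dotProductApplyCLM_apply (a : ι → ℝ) (b : F) (A : F →L[ℝ] (ι → ℝ)) :
    dotProductApplyCLM a b A = a ⬝ᵥ A b := by
  simp [dotProductApplyCLM, dotProduct]

theorem HasFDerivAt.dotProduct_apply {g : E → F →L[ℝ] (ι → ℝ)} {g' : E →L[ℝ] F →L[ℝ] (ι → ℝ)}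
    {y : E} (hg : HasFDerivAt g g' y) (a : ι → ℝ) (b : F) :
    HasFDerivAt (fun z => a ⬝ᵥ g z b) ((dotProductApplyCLM a b).comp g') y :=
  ((dotProductApplyCLM a b).hasFDerivAt.comp y hg).congr_of_eventuallyEq
    (.of_forall fun z => (dotProductApplyCLM_apply a b (g z)).symm)

end DotProductApply

def rot (w : Fin 2 → ℝ) : Fin 2 → ℝ := ![-(w 1), w 0]

@[simp]
theorem rot_single_zero : rot (Pi.single 0 1) = Pi.single 1 1 := by
  ext k; fin_cases k <;> simp [rot]

@[simp]
theorem rot_single_one : rot (Pi.single 1 1) = -Pi.single 0 1 := by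
  ext k; fin_cases k <;> simp [rot]

theorem map_eq_smul_add_smul {M F : Type*} [AddCommGroup M] [Module ℝ M]
    [FunLike F (Fin 2 → ℝ) M] [LinearMapClass F ℝ (Fin 2 → ℝ) M] (A : F) (w : Fin 2 → ℝ) :
    A w = w 0 • A (Pi.single 0 1) + w 1 • A (Pi.single 1 1) := by
  conv_lhs => rw [pi_eq_sum_univ' w]
  simp [Fin.sum_univ_two]

theorem mul_trace_eq_rot_dotProduct_add_dotProduct (B : (Fin 2 → ℝ) →ₗ[ℝ] (Fin 2 → ℝ))
    (n : Fin 2 → ℝ) :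
    (n 0 ^ 2 + n 1 ^ 2) * LinearMap.trace ℝ _ B = rot n ⬝ᵥ B (rot n) + n ⬝ᵥ B n := by
  rw [LinearMap.trace_eq_matrix_trace ℝ (Pi.basisFun ℝ (Fin 2)), LinearMap.toMatrix_eq_toMatrix',
    map_eq_smul_add_smul B (rot n), map_eq_smul_add_smul B n]
  simp only [Matrix.trace, diag_apply, LinearMap.toMatrix'_apply, Fin.sum_univ_two, dotProduct,
    rot, cons_val_zero, cons_val_one, cons_val_fin_one, Pi.add_apply, Pi.neg_apply,
    Pi.smul_apply, smul_eq_mul, neg_smul, neg_mul]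
  ring

theorem curlMat_apply (v : (Fin 2 → ℝ) → (Fin 2 → ℝ)) (z : Fin 2 → ℝ) (i j : Fin 2) :
    curlMat v z i j = fderiv ℝ v z (rot (Pi.single j 1)) i := by
  fin_cases j <;> simp [curlMat]

theorem symCurlMat_apply (v : (Fin 2 → ℝ) → (Fin 2 → ℝ)) (z : Fin 2 → ℝ) (i j : Fin 2) :
    symCurlMat v z i j = 2⁻¹ * (Pi.single i 1 ⬝ᵥ fderiv ℝ v z (rot (Pi.single j 1))
      + Pi.single j 1 ⬝ᵥ fderiv ℝ v z (rot (Pi.single i 1))) := by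
  simp [symCurlMat, curlMat_apply]

theorem rot_dotProduct_symCurlMat_mulVec (v : (Fin 2 → ℝ) → (Fin 2 → ℝ)) (z n : Fin 2 → ℝ) :
    rot n ⬝ᵥ symCurlMat v z *ᵥ n
      = 2⁻¹ * (rot n ⬝ᵥ fderiv ℝ v z (rot n) - n ⬝ᵥ fderiv ℝ v z n) := by
  rw [map_eq_smul_add_smul (fderiv ℝ v z) (rot n), map_eq_smul_add_smul (fderiv ℝ v z) n]
  simp only [symCurlMat, curlMat, dotProduct, mulVec, Fin.sum_univ_two, rot, Matrix.smul_apply,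
    Matrix.add_apply, of_apply, transpose_apply, smul_eq_mul, ↓reduceIte, one_ne_zero,
    cons_val_zero, cons_val_one, cons_val_fin_one, Pi.add_apply, Pi.neg_apply, Pi.smul_apply,
    neg_smul, neg_mul]
  ring

section SecondDerivative

variable {v : (Fin 2 → ℝ) → (Fin 2 → ℝ)} {H : (Fin 2 → ℝ) →L[ℝ] (Fin 2 → ℝ) →L[ℝ] (Fin 2 → ℝ)}
  {y : Fin 2 → ℝ}

theorem fderiv_symCurlMat_apply (hv : HasFDerivAt (fderiv ℝ v) H y) (i j : Fin 2)
    (u : Fin 2 → ℝ) :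
    fderiv ℝ (fun z => symCurlMat v z i j) y u
      = 2⁻¹ * (H u (rot (Pi.single j 1)) i + H u (rot (Pi.single i 1)) j) := by
  have h := ((hv.dotProduct_apply (Pi.single i 1) (rot (Pi.single j 1))).add
    (hv.dotProduct_apply (Pi.single j 1) (rot (Pi.single i 1)))).const_mul (2⁻¹ : ℝ)
  simp only [Pi.add_apply] at h
  simp_rw [symCurlMat_apply, h.fderiv]
  simp [mul_add]

theorem dotProduct_divSymCurl (hv : HasFDerivAt (fderiv ℝ v) H y)
    (hH : ∀ a b, H a b = H b a) (n : Fin 2 → ℝ) :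
    n ⬝ᵥ divSymCurl v y
      = 2⁻¹ * LinearMap.trace ℝ _ (H (rot n) : (Fin 2 → ℝ) →ₗ[ℝ] (Fin 2 → ℝ)) := by
  rw [LinearMap.trace_eq_matrix_trace ℝ (Pi.basisFun ℝ (Fin 2)), LinearMap.toMatrix_eq_toMatrix']
  simp only [dotProduct, Fin.sum_univ_two, divSymCurl, fderiv_symCurlMat_apply hv,
    rot_single_zero, rot_single_one, map_neg, Pi.neg_apply]
  rw [map_eq_smul_add_smul H (rot n)]
  simp only [Matrix.trace, diag_apply, LinearMap.toMatrix'_apply, Fin.sum_univ_two, rot,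
    hH (Pi.single 1 1) (Pi.single 0 1), cons_val_zero, cons_val_one, cons_val_fin_one, neg_smul,
    ContinuousLinearMap.toLinearMap_add, ContinuousLinearMap.toLinearMap_neg,
    ContinuousLinearMap.toLinearMap_smul, ContinuousLinearMap.coe_coe, map_add, map_neg, map_smul,
    Matrix.add_apply, Matrix.neg_apply, Matrix.smul_apply, smul_eq_mul]
  ring

end SecondDerivative

theorem stmt_1 (v : (Fin 2 → ℝ) → (Fin 2 → ℝ)) (hv : ContDiff ℝ 2 v)
    (n : Fin 2 → ℝ) (hn : n 0 ^ 2 + n 1 ^ 2 = 1) (y : Fin 2 → ℝ) :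
    fderiv ℝ (fun z => (![-(n 1), n 0] : Fin 2 → ℝ) ⬝ᵥ (symCurlMat v z).mulVec n) y
        ![-(n 1), n 0]
      + n ⬝ᵥ divSymCurl v y
    = fderiv ℝ
        (fun z => (![-(n 1), n 0] : Fin 2 → ℝ) ⬝ᵥ fderiv ℝ v z ![-(n 1), n 0]) y
        ![-(n 1), n 0] := by
  have hD2 : HasFDerivAt (fderiv ℝ v) (fderiv ℝ (fderiv ℝ v) y) y :=
    ((hv.fderiv_right (m := 1) le_rfl).differentiable one_ne_zero y).hasFDerivAt
  have hsymm : ∀ a b, fderiv ℝ (fderiv ℝ v) y a b = fderiv ℝ (fderiv ℝ v) y b a :=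
    second_derivative_symmetric (fun z => (hv.differentiable two_ne_zero z).hasFDerivAt) hD2
  have htrace := mul_trace_eq_rot_dotProduct_add_dotProduct (fderiv ℝ (fderiv ℝ v) y (rot n)) n
  rw [hn, one_mul] at htrace
  have hτ := ((hD2.dotProduct_apply (rot n) (rot n)).sub (hD2.dotProduct_apply n n)).const_mul
    (2⁻¹ : ℝ)
  simp only [Pi.sub_apply] at hτ
  change fderiv ℝ (fun z => rot n ⬝ᵥ symCurlMat v z *ᵥ n) y (rot n) + _
    = fderiv ℝ (fun z => rot n ⬝ᵥ fderiv ℝ v z (rot n)) y (rot n)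
  simp_rw [rot_dotProduct_symCurlMat_mulVec]
  rw [hτ.fderiv, (hD2.dotProduct_apply _ _).fderiv, dotProduct_divSymCurl hD2 hsymm, htrace]
  simp only [_root_.smul_apply, _root_.sub_apply,
    ContinuousLinearMap.comp_apply, dotProductApplyCLM_apply, smul_eq_mul,
    ContinuousLinearMap.coe_coe]
  ring
end

section
/- Let k ≥ 2 be an integer. For every polynomial p of total degree at most k−2 there exists a symmetric polynomial matrix τ whose entries have total degree at most k such that div div τ = p. -/
open MvPolynomial Matrix

/-- Real polynomials in two variables. -/
abbrev P2 := MvPolynomial (Fin 2) ℝ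

/-- The matrix `curl v` of a polynomial vector field, defined row-wise:
`(curl v)_{i1} = ∂₂ vᵢ`, `(curl v)_{i2} = -∂₁ vᵢ`. -/
noncomputable def pcurl (v : Fin 2 → P2) : Matrix (Fin 2) (Fin 2) P2 :=
  Matrix.of fun i j =>
    if j = 0 then pderiv (1 : Fin 2) (v i) else -(pderiv (0 : Fin 2) (v i))

/-- `sym curl v := (curl v + (curl v)ᵀ)/2`. -/
noncomputable def psymCurl (v : Fin 2 → P2) : Matrix (Fin 2) (Fin 2) P2 :=
  (1 / 2 : ℝ) • (pcurl v + (pcurl v)ᵀ)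

/-- `div div τ := Σ_{i,j} ∂ᵢ∂ⱼ τ_{ij}`. -/
noncomputable def pdivDiv (τ : Matrix (Fin 2) (Fin 2) P2) : P2 :=
  ∑ i : Fin 2, ∑ j : Fin 2, pderiv i (pderiv j (τ i j))

/-- The matrix `x xᵀ q` with `(i,j)`-entry `Xᵢ · Xⱼ · q`. -/
noncomputable def xxT (q : P2) : Matrix (Fin 2) (Fin 2) P2 :=
  Matrix.of fun i j => X i * X j * q

/-- The polynomial vector `x^⊥ = (X₂, -X₁)`. -/
noncomputable def xPerp : Fin 2 → P2 := ![X 1, -X 0]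

/-- `rot τ`, with components `(rot τ)ᵢ = ∂₁ τ_{i2} - ∂₂ τ_{i1}`. -/
noncomputable def prot (τ : Matrix (Fin 2) (Fin 2) P2) : Fin 2 → P2 :=
  fun i => pderiv (0 : Fin 2) (τ i 1) - pderiv (1 : Fin 2) (τ i 0)

/-- The Hessian matrix `∇²q` with entries `∂ᵢ∂ⱼ q`. -/
noncomputable def phess (q : P2) : Matrix (Fin 2) (Fin 2) P2 :=
  Matrix.of fun i j => pderiv i (pderiv j q)

/-- `sym(x^⊥ ⊗ v)`, the symmetric matrix with `(i,j)`-entry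
`((x^⊥)ᵢ vⱼ + vᵢ (x^⊥)ⱼ)/2`. -/
noncomputable def symTen (v : Fin 2 → P2) : Matrix (Fin 2) (Fin 2) P2 :=
  Matrix.of fun i j => (1 / 2 : ℝ) • (xPerp i * v j + v i * xPerp j)

/-- The gradient matrix `∇v` with entries `(∇v)_{ij} = ∂ⱼ vᵢ`. -/
noncomputable def pgrad (v : Fin 2 → P2) : Matrix (Fin 2) (Fin 2) P2 :=
  Matrix.of fun i j => pderiv j (v i)

/-- The symmetric gradient `def v := (∇v + (∇v)ᵀ)/2`. -/
noncomputable def pdef (v : Fin 2 → P2) : Matrix (Fin 2) (Fin 2) P2 :=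
  (1 / 2 : ℝ) • (pgrad v + (pgrad v)ᵀ)

/-- The matrix `x^⊥ (x^⊥)ᵀ q` with `(i,j)`-entry `(x^⊥)ᵢ (x^⊥)ⱼ q`. -/
noncomputable def xPerpxPerpT (q : P2) : Matrix (Fin 2) (Fin 2) P2 :=
  Matrix.of fun i j => xPerp i * xPerp j * q

/-- `rot rot τ := ∂₁(rot τ)₂ − ∂₂(rot τ)₁`. -/
noncomputable def protRot (τ : Matrix (Fin 2) (Fin 2) P2) : P2 :=
  pderiv (0 : Fin 2) (prot τ 1) - pderiv (1 : Fin 2) (prot τ 0)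

/-! Take `τ = q e₁e₁ᵀ`, where `q` is a double antiderivative of `p` in the first variable:
then `div div τ = ∂₁²q = p`, and antidifferentiation raises the total degree by at most one. -/

section Antiderivative

variable {σ K : Type*} [Field K]

noncomputable def antideriv (i : σ) (p : MvPolynomial σ K) : MvPolynomial σ K :=
  ∑ m ∈ p.support, monomial (m + Finsupp.single i 1) (p.coeff m / (m i + 1))

theorem pderiv_antideriv [CharZero K] (i : σ) (p : MvPolynomial σ K) :
    pderiv i (antideriv i p) = p := by
  conv_rhs => rw [p.as_sum]
  rw [antideriv, map_sum]
  refine Finset.sum_congr rfl fun m _ => ?_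
  rw [pderiv_monomial, add_tsub_cancel_right]
  congr 1
  simp only [Finsupp.add_apply, Finsupp.single_eq_same, Nat.cast_add, Nat.cast_one]
  field_simp

theorem totalDegree_antideriv_le (i : σ) (p : MvPolynomial σ K) :
    (antideriv i p).totalDegree ≤ p.totalDegree + 1 := by
  refine (totalDegree_finsetSum _ _).trans (Finset.sup_le fun m hm => ?_)
  refine (totalDegree_monomial_le _ _).trans ?_
  rw [Finsupp.sum_add_index' (fun _ => rfl) (fun _ _ _ => rfl),
    Finsupp.sum_single_index rfl]
  exact Nat.add_le_add_right (le_totalDegree hm) 1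

end Antiderivative

theorem pdivDiv_single (i j : Fin 2) (q : P2) :
    pdivDiv (Matrix.single i j q) = pderiv i (pderiv j q) := by
  rw [pdivDiv, Finset.sum_eq_single i (fun i' _ hi' => ?_) (by simp),
    Finset.sum_eq_single j (fun j' _ hj' => ?_) (by simp), single_apply_same]
  · rw [single_apply_of_col_ne _ _ hj'.symm, map_zero, map_zero]
  · exact Finset.sum_eq_zero fun j' _ => by
      rw [single_apply_of_row_ne hi'.symm, map_zero, map_zero]

theorem totalDegree_single_apply_le {σ R m n : Type*} [CommSemiring R] [DecidableEq m]
    [DecidableEq n] (i : m) (j : n) (q : MvPolynomial σ R) (i' : m) (j' : n) :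
    (Matrix.single i j q i' j').totalDegree ≤ q.totalDegree := by
  rw [single_apply]
  split_ifs
  · exact le_rfl
  · simp

/-- `div div` maps symmetric polynomial matrices of degree ≤ k onto
polynomials of degree ≤ k−2. -/
theorem stmt_4 (k : ℕ) (hk : 2 ≤ k) (p : P2) (hp : p.totalDegree ≤ k - 2) :
    ∃ τ : Matrix (Fin 2) (Fin 2) P2,
      τᵀ = τ ∧ (∀ i j, (τ i j).totalDegree ≤ k) ∧ pdivDiv τ = p := by
  set q := antideriv 0 (antideriv 0 p)
  have hq : q.totalDegree ≤ k :=
    calc q.totalDegree ≤ (antideriv 0 p).totalDegree + 1 := totalDegree_antideriv_le _ _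
      _ ≤ p.totalDegree + 1 + 1 := by grw [totalDegree_antideriv_le]
      _ ≤ k := by omega
  refine ⟨Matrix.single 0 0 q, transpose_single _ _ _,
    fun i j => (totalDegree_single_apply_le _ _ _ _ _).trans hq, ?_⟩
  rw [pdivDiv_single, pderiv_antideriv, pderiv_antideriv]
end

section
/- Let k ≥ 0 be an integer and let q be a homogeneous polynomial of degree k in two variables. Then div div (x xᵀ q) = (k+2)(k+3) q, where x xᵀ q denotes the symmetric polynomial matrix with entries Xᵢ·Xⱼ·q. -/
/-! By Euler's identity, `∑ᵢ ∂ᵢ (Xᵢ φ) = (2 + n) φ` for `φ` homogeneous of degree `n`. Applied to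
`Xᵢ q` (degree `k + 1`) it gives `∑ⱼ ∂ⱼ (Xᵢ Xⱼ q) = (k + 3) Xᵢ q`, and applied once more to `q`
it gives the factor `k + 2`. -/

open MvPolynomial Matrix

theorem MvPolynomial.IsHomogeneous.sum_pderiv_X_mul {σ R : Type*} [Fintype σ] [CommSemiring R]
    {φ : MvPolynomial σ R} {n : ℕ} (h : φ.IsHomogeneous n) :
    ∑ i, pderiv i (X i * φ) = (Fintype.card σ + n) • φ := by
  simp only [pderiv_mul, pderiv_X_self, one_mul, Finset.sum_add_distrib, Finset.sum_const,
    Finset.card_univ, h.sum_X_mul_pderiv, add_smul]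

/-- For a homogeneous polynomial `q` of degree `k`,
`div div (x xᵀ q) = (k+2)(k+3) q`. -/
theorem stmt_6 (k : ℕ) (q : P2) (hq : q.IsHomogeneous k) :
    pdivDiv (xxT q) = (((k + 2) * (k + 3) : ℕ) : P2) * q := by
  have hXq (i : Fin 2) : (X i * q).IsHomogeneous (k + 1) := by
    simpa only [add_comm 1 k] using (isHomogeneous_X ℝ i).mul hq
  calc pdivDiv (xxT q) = ∑ i, pderiv i (∑ j, pderiv j (X j * (X i * q))) := by
        simp only [pdivDiv, xxT, of_apply, map_sum]
        congr! 4
        ring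
    _ = ∑ i, pderiv i ((k + 3) • (X i * q)) := by
        simp only [(hXq _).sum_pderiv_X_mul, Fintype.card_fin, add_comm 2, add_assoc]
    _ = (k + 3) • (k + 2) • q := by
        simp only [map_nsmul, ← Finset.smul_sum, hq.sum_pderiv_X_mul, Fintype.card_fin, add_comm 2]
    _ = (((k + 2) * (k + 3) : ℕ) : P2) * q := by
        rw [smul_smul, nsmul_eq_mul, mul_comm (k + 3)]
end

section
/- Let k ≥ 2 be an integer. For every polynomial p of total degree at most k−2 there exists a unique polynomial q of total degree at most k−2 such that div div (x xᵀ q) = p; that is, div div is a bijection from {x xᵀ q : q of total degree ≤ k−2} onto the polynomials of total degree at most k−2. -/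
open MvPolynomial Matrix

/-!
Writing `E = ∑ᵢ Xᵢ ∂ᵢ` for the Euler operator, in `n` variables one has
`∑ᵢ ∂ᵢ (Xᵢ f) = (E + n) f` and `E (Xᵢ f) = Xᵢ (E + 1) f`, hence
`∑ᵢⱼ ∂ᵢ ∂ⱼ (Xᵢ Xⱼ q) = (E + n) (E + n + 1) q`.
Since `E` multiplies the monomial `X^m` by its degree `|m|`, for `n = 2` the map
`q ↦ div div (x xᵀ q)` multiplies the coefficient of `X^m` by `(|m| + 2) (|m| + 3) ≠ 0`.
It is therefore injective, and its inverse divides coefficients, which does not enlarge the support.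
-/

namespace MvPolynomial

variable {σ R : Type*} [CommSemiring R]

theorem coeff_X_mul_pderiv (i : σ) (f : MvPolynomial σ R) (m : σ →₀ ℕ) :
    coeff m (X i * pderiv i f) = m i * coeff m f := by
  induction f using MvPolynomial.induction_on' with
  | add f g hf hg => simp only [map_add, mul_add, coeff_add, hf, hg]
  | monomial n a =>
    classical
    rw [X_mul_pderiv_monomial, coeff_smul, coeff_monomial]
    split_ifs with h <;> simp [h, nsmul_eq_mul]

section Field

variable {K : Type*} [Field K] {L : MvPolynomial σ K → MvPolynomial σ K} {c : (σ →₀ ℕ) → K}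

theorem injective_of_coeff_eq_mul (hc : ∀ m, c m ≠ 0)
    (hL : ∀ q m, coeff m (L q) = c m * coeff m q) : Function.Injective L := by
  intro q q' h
  ext m
  have := congrArg (coeff m) h
  rw [hL, hL] at this
  exact mul_left_cancel₀ (hc m) this

theorem exists_totalDegree_le_of_coeff_eq_mul (hc : ∀ m, c m ≠ 0)
    (hL : ∀ q m, coeff m (L q) = c m * coeff m q) (p : MvPolynomial σ K) :
    ∃ q, q.totalDegree ≤ p.totalDegree ∧ L q = p := by
  classical
  let q := ∑ m ∈ p.support, monomial m (coeff m p / c m)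
  have coeff_q (m) : coeff m q = coeff m p / c m := by
    by_cases h : coeff m p = 0 <;> simp [q, coeff_sum, coeff_monomial, h]
  refine ⟨q, ?_, ?_⟩
  · refine (totalDegree_finsetSum _ _).trans (Finset.sup_le fun m hm => ?_)
    exact (totalDegree_monomial_le _ _).trans (le_totalDegree hm)
  · ext m
    rw [hL, coeff_q, mul_div_cancel₀ _ (hc m)]

end Field

variable [Fintype σ]

noncomputable def euler : MvPolynomial σ R →ₗ[R] MvPolynomial σ R :=
  ∑ i, LinearMap.mulLeft R (X i) ∘ₗ (pderiv i).toLinearMap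

theorem euler_apply (f : MvPolynomial σ R) : euler f = ∑ i, X i * pderiv i f := by
  simp [euler]

theorem coeff_euler (f : MvPolynomial σ R) (m : σ →₀ ℕ) :
    coeff m (euler f) = m.degree * coeff m f := by
  simp only [euler_apply, coeff_sum, coeff_X_mul_pderiv, ← Finset.sum_mul, Finsupp.degree_eq_sum,
    Nat.cast_sum]

theorem sum_pderiv_X_mul (f : MvPolynomial σ R) :
    ∑ i, pderiv i (X i * f) = (Fintype.card σ : R) • f + euler f := by
  simp only [pderiv_mul, pderiv_X_self, one_mul, Finset.sum_add_distrib, Finset.sum_const,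
    Finset.card_univ, euler_apply, Nat.cast_smul_eq_nsmul]

theorem euler_X_mul (i : σ) (f : MvPolynomial σ R) :
    euler (X i * f) = X i * f + X i * euler f := by
  classical
  simp only [euler_apply, pderiv_mul, pderiv_X, mul_add, Finset.sum_add_distrib, Finset.mul_sum]
  congr 1
  · simp [Pi.single_apply]
  · simp only [mul_left_comm (X i)]

theorem coeff_sum_pderiv_pderiv_X_mul_X_mul (q : MvPolynomial σ R) (m : σ →₀ ℕ) :
    coeff m (∑ i, ∑ j, pderiv i (pderiv j (X i * X j * q))) =
      (m.degree + Fintype.card σ) * (m.degree + Fintype.card σ + 1) * coeff m q := by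
  have inner (i : σ) : ∑ j, pderiv j (X i * X j * q) =
      X i * (((Fintype.card σ : R) + 1) • q + euler q) := by
    rw [Finset.sum_congr rfl fun j _ => by rw [mul_comm (X i) (X j), mul_assoc],
      sum_pderiv_X_mul, euler_X_mul]
    simp only [smul_eq_C_mul, map_add, map_one]
    ring
  simp only [← map_sum, inner, sum_pderiv_X_mul, map_add, map_smul, coeff_add, coeff_smul,
    coeff_euler, smul_eq_mul]
  ring

end MvPolynomial

theorem coeff_pdivDiv_xxT (q : P2) (m : Fin 2 →₀ ℕ) :
    coeff m (pdivDiv (xxT q)) = (m.degree + 2) * (m.degree + 3) * coeff m q := by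
  rw [show pdivDiv (xxT q) = ∑ i, ∑ j, pderiv i (pderiv j (X i * X j * q)) from rfl,
    coeff_sum_pderiv_pderiv_X_mul_X_mul, Fintype.card_fin]
  norm_num [add_assoc]

theorem stmt_7_general (k : ℕ) (p : P2) (hp : p.totalDegree ≤ k - 2) :
    ∃! q : P2, q.totalDegree ≤ k - 2 ∧ pdivDiv (xxT q) = p := by
  have hc (m : Fin 2 →₀ ℕ) : ((m.degree + 2) * (m.degree + 3) : ℝ) ≠ 0 := by positivity
  obtain ⟨q, hdeg, hq⟩ := exists_totalDegree_le_of_coeff_eq_mul hc coeff_pdivDiv_xxT p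
  refine ⟨q, ⟨hdeg.trans hp, hq⟩, fun q' hq' => ?_⟩
  exact injective_of_coeff_eq_mul hc coeff_pdivDiv_xxT (hq'.2.trans hq.symm)

/-- `div div` is a bijection from `{x xᵀ q : deg q ≤ k−2}` onto
polynomials of degree ≤ k−2. -/
theorem stmt_7 (k : ℕ) (hk : 2 ≤ k) (p : P2) (hp : p.totalDegree ≤ k - 2) :
    ∃! q : P2, q.totalDegree ≤ k - 2 ∧ pdivDiv (xxT q) = p :=
  stmt_7_general k p hp
end
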